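/- arXiv:1703.07304 — 2 statements merged into one kernel-verified Lean document; each statement's English description precedes it below -/
import Mathlib

section
/- Let C be a coassociative coalgebra over k with coproduct Δ and let (A, ≺, ≻, •) be a noncommutative quasi-shuffle algebra. Then the space of linear maps Hom(C, A) is a noncommutative quasi-shuffle algebra under the convolution-type products (f ≺ g)(c) := f(c⁽¹⁾) ≺ g(c⁽²⁾), (f ≻ g)(c) := f(c⁽¹⁾) ≻ g(c⁽²⁾), (f • g)(c) := f(c⁽¹⁾) • g(c⁽²⁾) (Sweedler notation Δ(c) = c⁽¹⁾ ⊗ c⁽²⁾). -/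
open scoped TensorProduct
open TensorProduct

noncomputable section

namespace QShPaper

variable (k : Type*) [Field k]

/-! ### Convolution algebra of linear maps from a coalgebra to an algebra -/

section Conv

variable {Q : Type*} [AddCommGroup Q] [Module k Q]
variable (A : Type*) [Ring A] [Algebra k A]

/-- The convolution product `f * g := m_A ∘ (f ⊗ g) ∘ Δ` associated to a
comultiplication `com` on `Q`. -/
def conv (com : Q →ₗ[k] Q ⊗[k] Q) (f g : Q →ₗ[k] A) : Q →ₗ[k] A :=
  LinearMap.mul' k A ∘ₗ TensorProduct.map f g ∘ₗ com

/-- The unit `u_A ∘ η` of the convolution product. -/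
def convUnit (cou : Q →ₗ[k] k) : Q →ₗ[k] A := Algebra.linearMap k A ∘ₗ cou

/-- Convolution powers `f^{*n}`, with `f^{*0}` the convolution unit. -/
def convPow (com : Q →ₗ[k] Q ⊗[k] Q) (cou : Q →ₗ[k] k) (f : Q →ₗ[k] A) : ℕ → (Q →ₗ[k] A)
  | 0 => convUnit k A cou
  | n + 1 => conv k A com f (convPow com cou f n)

end Conv

/-! ### Iterated (reduced) coproducts, conilpotency -/

section Red

variable {Q : Type*} [AddCommGroup Q] [Module k Q]

/-- `Q ≃ Q^{⊗1}`. -/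
def toPow1 : Q ≃ₗ[k] ⨂[k]^1 Q := (PiTensorProduct.subsingletonEquiv (s := fun _ : Fin 1 => Q) (0 : Fin 1)).symm

variable (one : Q) (com : Q →ₗ[k] Q ⊗[k] Q)

/-- The reduced coproduct `Δ'(h) := Δ(h) − 1 ⊗ h − h ⊗ 1`. -/
def redComul : Q →ₗ[k] Q ⊗[k] Q :=
  com - TensorProduct.mk k Q Q one - (TensorProduct.mk k Q Q).flip one

/-- Iterated reduced coproducts: `redIter n = Δ'^{[n+1]} : Q → Q^{⊗(n+1)}`,
with `Δ'^{[1]} = Id` and `Δ'^{[n+1]} = (Id ⊗ Δ'^{[n]}) ∘ Δ'`. -/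
def redIter : (n : ℕ) → Q →ₗ[k] ⨂[k]^(n+1) Q
  | 0 => (toPow1 k).toLinearMap
  | n + 1 =>
      (TensorPower.cast k Q (show 1 + (n+1) = n+1+1 by omega)).toLinearMap ∘ₗ
        (TensorPower.mulEquiv (R := k) (M := Q) (n := 1) (m := n+1)).toLinearMap ∘ₗ
          TensorProduct.map (toPow1 k).toLinearMap (redIter n) ∘ₗ redComul k one com

/-- Iterated coproducts: `fullIter n = Δ^{[n+1]} : Q → Q^{⊗(n+1)}`,
with `Δ^{[1]} = Id` and `Δ^{[n+1]} = (Id ⊗ Δ^{[n]}) ∘ Δ`. -/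
def fullIter : (n : ℕ) → Q →ₗ[k] ⨂[k]^(n+1) Q
  | 0 => (toPow1 k).toLinearMap
  | n + 1 =>
      (TensorPower.cast k Q (show 1 + (n+1) = n+1+1 by omega)).toLinearMap ∘ₗ
        (TensorPower.mulEquiv (R := k) (M := Q) (n := 1) (m := n+1)).toLinearMap ∘ₗ
          TensorProduct.map (toPow1 k).toLinearMap (fullIter n) ∘ₗ com

/-- A (coaugmented) coalgebra is (locally) conilpotent if every element of the kernel of
the counit. is annihilated by some iterated reduced coproduct. -/
def IsConilpotent (cou : Q →ₗ[k] k) : Prop :=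
  ∀ x ∈ LinearMap.ker cou, ∃ n, redIter k one com n x = 0

end Red

/-- `m_A^{[n]} ∘ f^{⊗n} : H^{⊗n} → A`. -/
def prodPow {H : Type*} [AddCommGroup H] [Module k H] (A : Type*) [Ring A] [Algebra k A]
    (f : H →ₗ[k] A) (n : ℕ) : (⨂[k]^n H) →ₗ[k] A :=
  PiTensorProduct.lift ((MultilinearMap.mkPiAlgebraFin k n A).compLinearMap fun _ => f)


/-- A model of the quasi-shuffle Hopf algebra `QSh(A) = ⊕_{n≥0} A^{⊗n}` over a
(possibly non-unital) associative algebra `A`: `emp` is the empty word, `cons` is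
prepending of a letter, `mul` is the quasi-shuffle product `⧢`, `comul` the
deconcatenation coproduct and `counit` the counit. -/
structure QShModel (A Q : Type*) [NonUnitalRing A] [Module k A]
    [SMulCommClass k A A] [IsScalarTower k A A] [AddCommGroup Q] [Module k Q] where
  emp : Q
  cons : A →ₗ[k] Q →ₗ[k] Q
  mul : Q →ₗ[k] Q →ₗ[k] Q
  comul : Q →ₗ[k] Q ⊗[k] Q
  counit : Q →ₗ[k] k
  /-- words span `QSh(A)` -/
  span_words : Submodule.span k
    (Set.range fun w : List A => w.foldr (fun a u => cons a u) emp) = ⊤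
  /-- `QSh(A) ≅ k ⊕ (A ⊗ QSh(A))` via `(c, a ⊗ u) ↦ c • 1 + a·u` -/
  theta_bij : Function.Bijective
    ((LinearMap.toSpanSingleton k Q emp).coprod (TensorProduct.lift cons))
  mul_emp_left : ∀ u, mul emp u = u
  mul_emp_right : ∀ u, mul u emp = u
  /-- the quasi-shuffle recursion `av ⧢ bw = a(v ⧢ bw) + b(av ⧢ w) + (a·_A b)(v ⧢ w)` -/
  mul_cons : ∀ (a b : A) (v w : Q),
    mul (cons a v) (cons b w) =
      cons a (mul v (cons b w)) + cons b (mul (cons a v) w) + cons (a * b) (mul v w)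
  comul_emp : comul emp = emp ⊗ₜ[k] emp
  /-- the deconcatenation recursion -/
  comul_cons : ∀ (a : A) (u : Q),
    comul (cons a u) = emp ⊗ₜ[k] (cons a u) + (TensorProduct.map (cons a) LinearMap.id) (comul u)
  counit_emp : counit emp = 1
  counit_cons : ∀ (a : A) (u : Q), counit (cons a u) = 0

namespace QShModel

variable {k}
variable {A Q : Type*} [NonUnitalRing A] [Module k A]
    [SMulCommClass k A A] [IsScalarTower k A A] [AddCommGroup Q] [Module k Q]

/-- The word `a_1…a_n ∈ QSh(A)`. -/
def ofWord (M : QShModel k A Q) (w : List A) : Q := w.foldr (fun a u => M.cons a u) M.emp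

/-- The collapse `H^{⊗(n+1)} → QSh(A)`, `x_1 ⊗ … ⊗ x_{n+1} ↦ c(x_1)…c(x_{n+1})`
(a word of length `n+1`) induced by a linear map `c : H → A`. -/
def wordMap (M : QShModel k A Q) {H : Type*} [AddCommGroup H] [Module k H]
    (c : H →ₗ[k] A) : (n : ℕ) → (⨂[k]^(n+1) H) →ₗ[k] Q
  | 0 => ((M.cons ∘ₗ c).flip M.emp) ∘ₗ (toPow1 k).symm.toLinearMap
  | n + 1 =>
      TensorProduct.lift (M.cons ∘ₗ c) ∘ₗ
        TensorProduct.map (toPow1 k).symm.toLinearMap (M.wordMap c n) ∘ₗ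
          (TensorPower.mulEquiv (R := k) (M := H) (n := 1) (m := n+1)).symm.toLinearMap ∘ₗ
            (TensorPower.cast k H (show n+1+1 = 1+(n+1) by omega)).toLinearMap

/-- `Ψ = QSh(c) ∘ ι : H → QSh(A)`, i.e. `Ψ(1) = 1` and, for `h` in the kernel of the
counit, `Ψ(h) = Σ_{n≥1} c^{⊗n}(Δ'^{[n]}(h))` (a finite sum, each term being viewed
as a word of length `n`). -/
def IotaComp (M : QShModel k A Q) {H : Type*} [AddCommGroup H] [Module k H]
    (oneH : H) (com : H →ₗ[k] H ⊗[k] H) (cou : H →ₗ[k] k)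
    (c : H →ₗ[k] A) (Ψ : H →ₗ[k] Q) : Prop :=
  Ψ oneH = M.emp ∧
    ∀ h ∈ LinearMap.ker cou, ∃ N, ∀ n ≥ N,
      Ψ h = ∑ i ∈ Finset.range (n+1), M.wordMap c i (redIter k oneH com i h)

end QShModel
end QShPaper

namespace QShPaper

/-- The convolution-type product `(f ⊛ g)(c) := m(f(c⁽¹⁾), g(c⁽²⁾))` on linear maps from a
coalgebra `(C, com)` to a module `V` equipped with a bilinear product `m`. -/
def convWith (k : Type*) [Field k] {C V : Type*} [AddCommGroup C] [Module k C]
    [AddCommGroup V] [Module k V] (com : C →ₗ[k] C ⊗[k] C)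
    (m : V →ₗ[k] V →ₗ[k] V) (f g : C →ₗ[k] V) : C →ₗ[k] V :=
  TensorProduct.lift m ∘ₗ TensorProduct.map f g ∘ₗ com

end QShPaper

/-! Each NQSh axiom has the shape `m₁ (m₂ x y) z = n₁ x (n₂ y z)` for bilinear `mᵢ, nᵢ`, taking
`⋆ = ≺ + ≻ + •` as one more bilinear product. Evaluated on `Δ²(c)`, both sides of the convolved
identity are the trilinear maps `m₁ ∘ (m₂ ⊗ id)` and `n₁ ∘ (id ⊗ n₂)` applied to `(f ⊗ g ⊗ h)`,
and coassociativity says the two bracketings of `Δ²(c)` agree. -/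

namespace QShPaper

variable {k : Type*} [Field k] {C V : Type*} [AddCommGroup C] [Module k C]
  [AddCommGroup V] [Module k V]

theorem convWith_add_mul (com : C →ₗ[k] C ⊗[k] C) (m m' : V →ₗ[k] V →ₗ[k] V)
    (f g : C →ₗ[k] V) :
    convWith k com (m + m') f g = convWith k com m f g + convWith k com m' f g := by
  simp only [convWith, ← LinearMap.add_comp]
  congr 1
  exact map_add (TensorProduct.lift.equiv (.id k) V V V) m m'

theorem convWith_convWith_of_forall [Coalgebra k C] {m₁ m₂ n₁ n₂ : V →ₗ[k] V →ₗ[k] V}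
    (hmn : ∀ x y z, m₁ (m₂ x y) z = n₁ x (n₂ y z)) (f g h : C →ₗ[k] V) :
    convWith k Coalgebra.comul m₁ (convWith k Coalgebra.comul m₂ f g) h =
      convWith k Coalgebra.comul n₁ f (convWith k Coalgebra.comul n₂ g h) := by
  have hlift : TensorProduct.lift m₁ ∘ₗ
      TensorProduct.map (TensorProduct.lift m₂ ∘ₗ TensorProduct.map f g) h =
      TensorProduct.lift n₁ ∘ₗ
        TensorProduct.map f (TensorProduct.lift n₂ ∘ₗ TensorProduct.map g h) ∘ₗ
          (TensorProduct.assoc k C C C).toLinearMap := by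
    ext x y z
    simp [hmn]
  ext c
  simpa [convWith, LinearMap.comp_assoc] using
    congr($hlift (Coalgebra.comul.rTensor C (Coalgebra.comul c)))

end QShPaper

open QShPaper in
theorem stmt6_hom_coalgebra_to_nqsh_is_nqsh_general
    (k : Type*) [Field k]
    (C : Type*) [AddCommGroup C] [Module k C] [Coalgebra k C]
    (A : Type*) [AddCommGroup A] [Module k A]
    (pl pr pb : A →ₗ[k] A →ₗ[k] A)
    -- `(A, •)` is a (nonunital) associative algebra
    (hassoc : ∀ x y z : A, pb (pb x y) z = pb x (pb y z))
    -- the six NQSh axioms, with `x ⋆ y = x≺y + x≻y + x•y`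
    (h1 : ∀ x y z : A, pl (pl x y) z = pl x (pl y z + pr y z + pb y z))
    (h2 : ∀ x y z : A, pl (pr x y) z = pr x (pl y z))
    (h3 : ∀ x y z : A, pr (pl x y + pr x y + pb x y) z = pr x (pr y z))
    (h4 : ∀ x y z : A, pb (pl x y) z = pb x (pr y z))
    (h5 : ∀ x y z : A, pb (pr x y) z = pr x (pb y z))
    (h6 : ∀ x y z : A, pl (pb x y) z = pb x (pl y z)) :
    -- `Hom(C,A)` with the lifted products is a NQSh algebra:
    (∀ f g h : C →ₗ[k] A,
      convWith k Coalgebra.comul pb (convWith k Coalgebra.comul pb f g) h =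
        convWith k Coalgebra.comul pb f (convWith k Coalgebra.comul pb g h)) ∧
    (∀ f g h : C →ₗ[k] A,
      convWith k Coalgebra.comul pl (convWith k Coalgebra.comul pl f g) h =
        convWith k Coalgebra.comul pl f
          (convWith k Coalgebra.comul pl g h + convWith k Coalgebra.comul pr g h +
            convWith k Coalgebra.comul pb g h)) ∧
    (∀ f g h : C →ₗ[k] A,
      convWith k Coalgebra.comul pl (convWith k Coalgebra.comul pr f g) h =
        convWith k Coalgebra.comul pr f (convWith k Coalgebra.comul pl g h)) ∧
    (∀ f g h : C →ₗ[k] A,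
      convWith k Coalgebra.comul pr
          (convWith k Coalgebra.comul pl f g + convWith k Coalgebra.comul pr f g +
            convWith k Coalgebra.comul pb f g) h =
        convWith k Coalgebra.comul pr f (convWith k Coalgebra.comul pr g h)) ∧
    (∀ f g h : C →ₗ[k] A,
      convWith k Coalgebra.comul pb (convWith k Coalgebra.comul pl f g) h =
        convWith k Coalgebra.comul pb f (convWith k Coalgebra.comul pr g h)) ∧
    (∀ f g h : C →ₗ[k] A,
      convWith k Coalgebra.comul pb (convWith k Coalgebra.comul pr f g) h =
        convWith k Coalgebra.comul pr f (convWith k Coalgebra.comul pb g h)) ∧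
    (∀ f g h : C →ₗ[k] A,
      convWith k Coalgebra.comul pl (convWith k Coalgebra.comul pb f g) h =
        convWith k Coalgebra.comul pb f (convWith k Coalgebra.comul pl g h)) := by
  refine ⟨convWith_convWith_of_forall hassoc, fun f g h => ?_, convWith_convWith_of_forall h2,
    fun f g h => ?_, convWith_convWith_of_forall h4, convWith_convWith_of_forall h5,
    convWith_convWith_of_forall h6⟩
  · simpa only [convWith_add_mul] using
      convWith_convWith_of_forall (n₂ := pl + pr + pb) h1 f g h
  · simpa only [convWith_add_mul] using
      convWith_convWith_of_forall (m₂ := pl + pr + pb) h3 f g h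

open QShPaper in
/-- If `C` is a coassociative coalgebra and `(A, ≺, ≻, •)` a noncommutative
quasi-shuffle algebra, then `Hom(C, A)` is a noncommutative quasi-shuffle algebra for the
convolution-type products `(f ≺ g)(c) := f(c⁽¹⁾) ≺ g(c⁽²⁾)`, etc. -/
theorem stmt6_hom_coalgebra_to_nqsh_is_nqsh
    (k : Type*) [Field k] [CharZero k]
    (C : Type*) [AddCommGroup C] [Module k C] [Coalgebra k C]
    (A : Type*) [AddCommGroup A] [Module k A]
    (pl pr pb : A →ₗ[k] A →ₗ[k] A)
    -- `(A, •)` is a (nonunital) associative algebra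
    (hassoc : ∀ x y z : A, pb (pb x y) z = pb x (pb y z))
    -- the six NQSh axioms, with `x ⋆ y = x≺y + x≻y + x•y`
    (h1 : ∀ x y z : A, pl (pl x y) z = pl x (pl y z + pr y z + pb y z))
    (h2 : ∀ x y z : A, pl (pr x y) z = pr x (pl y z))
    (h3 : ∀ x y z : A, pr (pl x y + pr x y + pb x y) z = pr x (pr y z))
    (h4 : ∀ x y z : A, pb (pl x y) z = pb x (pr y z))
    (h5 : ∀ x y z : A, pb (pr x y) z = pr x (pb y z))
    (h6 : ∀ x y z : A, pl (pb x y) z = pb x (pl y z)) :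
    -- `Hom(C,A)` with the lifted products is a NQSh algebra:
    (∀ f g h : C →ₗ[k] A,
      convWith k Coalgebra.comul pb (convWith k Coalgebra.comul pb f g) h =
        convWith k Coalgebra.comul pb f (convWith k Coalgebra.comul pb g h)) ∧
    (∀ f g h : C →ₗ[k] A,
      convWith k Coalgebra.comul pl (convWith k Coalgebra.comul pl f g) h =
        convWith k Coalgebra.comul pl f
          (convWith k Coalgebra.comul pl g h + convWith k Coalgebra.comul pr g h +
            convWith k Coalgebra.comul pb g h)) ∧
    (∀ f g h : C →ₗ[k] A,
      convWith k Coalgebra.comul pl (convWith k Coalgebra.comul pr f g) h =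
        convWith k Coalgebra.comul pr f (convWith k Coalgebra.comul pl g h)) ∧
    (∀ f g h : C →ₗ[k] A,
      convWith k Coalgebra.comul pr
          (convWith k Coalgebra.comul pl f g + convWith k Coalgebra.comul pr f g +
            convWith k Coalgebra.comul pb f g) h =
        convWith k Coalgebra.comul pr f (convWith k Coalgebra.comul pr g h)) ∧
    (∀ f g h : C →ₗ[k] A,
      convWith k Coalgebra.comul pb (convWith k Coalgebra.comul pl f g) h =
        convWith k Coalgebra.comul pb f (convWith k Coalgebra.comul pr g h)) ∧
    (∀ f g h : C →ₗ[k] A,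
      convWith k Coalgebra.comul pb (convWith k Coalgebra.comul pr f g) h =
        convWith k Coalgebra.comul pr f (convWith k Coalgebra.comul pb g h)) ∧
    (∀ f g h : C →ₗ[k] A,
      convWith k Coalgebra.comul pl (convWith k Coalgebra.comul pb f g) h =
        convWith k Coalgebra.comul pb f (convWith k Coalgebra.comul pl g h)) :=
  stmt6_hom_coalgebra_to_nqsh_is_nqsh_general k C A pl pr pb hassoc h1 h2 h3 h4 h5 h6
end
end

section
/- (Quasi-shuffle PBW theorem.) Let A be a (nonunital) commutative k-algebra and B a quasi-shuffle algebra. Then restriction to A = QSh(A)_1 induces a natural bijection between quasi-shuffle algebra morphisms QSh⁺(A) → B and (nonunital) algebra morphisms A → B; equivalently, every algebra morphism φ : (A, ·_A) → (B, •) extends uniquely to a quasi-shuffle algebra morphism QSh⁺(A) → B, which sends the word a_1…a_n to φ(a_1) ≺ (φ(a_2) ≺ (… (φ(a_{n−1}) ≺ φ(a_n)))). In categorical terms, Hoffman's functor A ↦ QSh⁺(A) is left adjoint to the forgetful functor from quasi-shuffle algebras to nonunital commutative algebras. -/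
/-!
A quasi-shuffle morphism `F` is forced by the recursion `F(1) = 0`, `F(au) = φ(a) ≺ F̃(u)`,
where `F̃ = ε·1 + F` is its unital extension and `x ≺ 1 = x`: indeed `au = a ≺ u` for `u` of
positive length. Since `QSh(A) ≅ k ⊕ A ⊗ QSh(A)`, this recursion defines a linear map word
length by word length. Induction on the lengths of two words then shows that `F̃` turns `⧢`
into the unital extension of `⋆`; the inductive step is an identity in `B` that follows from the
quasi-shuffle axioms, the commutativity of `•` and the multiplicativity of `φ`. Compatibility
with `≺` and `•` follows by unfolding `av ≺ w = a(v ⧢ w)` and `av • bw = (ab)(v ⧢ w)`.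
-/

open scoped TensorProduct
open TensorProduct

noncomputable section

namespace QShPaper

/-- A model of `QSh(A)` together with the half-shuffle products `≺` and `•` of
Hoffman's quasi-shuffle algebra: `av ≺ bw = a(v ⋆ bw)`, `av • bw = (a·_A b)(v ⋆ w)`,
`1 ≺ u = 0 = 1 • u = u • 1`, and `⋆ = ⧢` is the full quasi-shuffle product. -/
structure QShFullModel (k : Type*) [Field k] (A Q : Type*) [NonUnitalRing A] [Module k A]
    [SMulCommClass k A A] [IsScalarTower k A A] [AddCommGroup Q] [Module k Q]
    extends QShModel k A Q where
  prec : Q →ₗ[k] Q →ₗ[k] Q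
  bul : Q →ₗ[k] Q →ₗ[k] Q
  prec_emp_left : ∀ u : Q, prec emp u = 0
  prec_cons : ∀ (a : A) (v u : Q), prec (cons a v) u = cons a (mul v u)
  bul_emp_left : ∀ u : Q, bul emp u = 0
  bul_emp_right : ∀ u : Q, bul u emp = 0
  bul_cons : ∀ (a b : A) (v w : Q),
    bul (cons a v) (cons b w) = cons (a * b) (mul v w)
  mul_eq_on_pos : ∀ u ∈ LinearMap.ker counit, ∀ v ∈ LinearMap.ker counit,
    mul u v = prec u v + prec v u + bul u v

end QShPaper

theorem LinearMap.exists_eqOn_of_monotone {R M N : Type*} [Semiring R] [AddCommMonoid M]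
    [Module R M] [AddCommMonoid N] [Module R N] {p : ℕ → Submodule R M} (hp : Monotone p)
    (hcover : ∀ x, ∃ n, x ∈ p n) {f : ℕ → M →ₗ[R] N}
    (hf : ∀ n, Set.EqOn (f (n + 1)) (f n) (p n)) :
    ∃ F : M →ₗ[R] N, ∀ n, Set.EqOn F (f n) (p n) := by
  have hstable : ∀ {n m}, n ≤ m → Set.EqOn (f m) (f n) (p n) := by
    intro n m hnm
    induction m, hnm using Nat.le_induction with
    | base => exact Set.eqOn_refl _ _
    | succ m hnm ih => exact fun x hx => (hf m (hp hnm hx)).trans (ih hx)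
  choose N hN using hcover
  have hF : ∀ n x, x ∈ p n → f (N x) x = f n x := fun n x hx =>
    (hstable (le_max_left (N x) n) (hN x)).symm.trans (hstable (le_max_right _ n) hx)
  refine ⟨
    { toFun := fun x => f (N x) x
      map_add' := fun x y => ?_
      map_smul' := fun c x => ?_ }, hF⟩
  · have hx := hp (le_max_left (N x) (N y)) (hN x)
    have hy := hp (le_max_right (N x) (N y)) (hN y)
    simp only [hF _ x hx, hF _ y hy, hF _ _ (add_mem hx hy), map_add]
  · simp only [hF _ _ (Submodule.smul_mem _ c (hN x)), map_smul, RingHom.id_apply]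

namespace QShPaper

variable {k : Type*} [Field k]
variable {A : Type*} [NonUnitalRing A] [Module k A] [SMulCommClass k A A] [IsScalarTower k A A]
variable {Q : Type*} [AddCommGroup Q] [Module k Q]
variable {B : Type*} [AddCommGroup B] [Module k B]

section QShAlgebra

variable (precB bulB : B →ₗ[k] B →ₗ[k] B)

def qshStar : B →ₗ[k] B →ₗ[k] B := precB + precB.flip + bulB

@[simp]
lemma qshStar_apply (x y : B) :
    qshStar precB bulB x y = precB x y + precB y x + bulB x y := rfl

structure IsQShAlgebra : Prop where
  bul_comm : ∀ x y, bulB x y = bulB y x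
  prec_prec : ∀ x y z, precB (precB x y) z = precB x (precB y z + precB z y + bulB y z)
  bul_prec : ∀ x y z, precB (bulB x y) z = bulB x (precB y z)

namespace IsQShAlgebra

variable {precB bulB}

lemma qshStar_comm (hB : IsQShAlgebra precB bulB) (x y : B) :
    qshStar precB bulB x y = qshStar precB bulB y x := by
  simp only [qshStar_apply, hB.bul_comm x y]
  abel

lemma bul_prec_left (hB : IsQShAlgebra precB bulB) (x y z : B) :
    bulB (precB x y) z = precB (bulB x z) y := by
  rw [hB.bul_comm, ← hB.bul_prec, hB.bul_comm z x]

lemma prec_smul_add_prec (hB : IsQShAlgebra precB bulB) (p : k) (α y z : B) :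
    precB (p • α + precB α y) z = precB α (p • z + qshStar precB bulB y z) := by
  simp only [map_add, map_smul, LinearMap.add_apply, LinearMap.smul_apply, hB.prec_prec,
    qshStar_apply]

lemma bul_smul_add_prec (hB : IsQShAlgebra precB bulB) (p q : k) (α β y w : B) :
    bulB (p • α + precB α y) (q • β + precB β w) =
      (p * q) • bulB α β + precB (bulB α β) (p • w + q • y + qshStar precB bulB y w) := by
  simp only [map_add, map_smul, LinearMap.add_apply, LinearMap.smul_apply, ← hB.bul_prec,
    hB.bul_prec_left, hB.prec_prec, qshStar_apply]
  module

/-- `U`, `V` stand for the images of two words `av`, `bw`, with `y`, `w` the images and `p`, `q`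
the counits of `v`, `w`. -/
lemma qshStar_smul_add_prec (hB : IsQShAlgebra precB bulB) (p q : k) (α β y w U V : B)
    (hU : U = p • α + precB α y) (hV : V = q • β + precB β w) :
    qshStar precB bulB U V =
      precB α (p • V + qshStar precB bulB y V) + precB β (q • U + qshStar precB bulB U w) +
        ((p * q) • bulB α β +
          precB (bulB α β) (p • w + q • y + qshStar precB bulB y w)) := by
  have hUV := hB.prec_smul_add_prec p α y V
  have hVU := hB.prec_smul_add_prec q β w U
  have hbul := hB.bul_smul_add_prec p q α β y w
  rw [← hU, ← hV] at *
  rw [hB.qshStar_comm w U] at hVU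
  rw [qshStar_apply, hUV, hVU, hbul]

end IsQShAlgebra

end QShAlgebra

namespace QShModel

variable (M : QShModel k A Q)

lemma ofWord_nil : M.ofWord [] = M.emp := rfl

lemma ofWord_cons (a : A) (l : List A) : M.ofWord (a :: l) = M.cons a (M.ofWord l) := rfl

lemma linearMap_ext_ofWord {X : Type*} [AddCommGroup X] [Module k X] {f g : Q →ₗ[k] X}
    (h : ∀ l, f (M.ofWord l) = g (M.ofWord l)) : f = g :=
  LinearMap.ext_on M.span_words (by rintro _ ⟨l, rfl⟩; exact h l)

lemma linearMap_ext₂_ofWord {X : Type*} [AddCommGroup X] [Module k X]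
    {f g : Q →ₗ[k] Q →ₗ[k] X}
    (h : ∀ l l', f (M.ofWord l) (M.ofWord l') = g (M.ofWord l) (M.ofWord l')) : f = g :=
  M.linearMap_ext_ofWord fun l => M.linearMap_ext_ofWord (h l)

lemma counit_mul (u v : Q) : M.counit (M.mul u v) = M.counit u * M.counit v := by
  suffices M.mul.compr₂ M.counit = (LinearMap.mul k k).compl₁₂ M.counit M.counit from
    LinearMap.congr_fun₂ this u v
  refine M.linearMap_ext₂_ofWord fun l l' => ?_
  simp only [LinearMap.compr₂_apply, LinearMap.compl₁₂_apply, LinearMap.mul_apply']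
  match l, l' with
  | [], _ => rw [ofWord_nil, M.mul_emp_left, M.counit_emp, one_mul]
  | _ :: _, [] => rw [ofWord_nil, M.mul_emp_right, M.counit_emp, mul_one]
  | _ :: _, _ :: _ =>
    simp only [ofWord_cons, M.mul_cons, map_add, M.counit_cons, mul_zero, add_zero]

def wordsLe (n : ℕ) : Submodule k Q :=
  Submodule.span k (M.ofWord '' {l | l.length ≤ n})

lemma ofWord_mem_wordsLe {n : ℕ} {l : List A} (h : l.length ≤ n) : M.ofWord l ∈ M.wordsLe n :=
  Submodule.subset_span ⟨l, h, rfl⟩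

lemma wordsLe_mono : Monotone M.wordsLe :=
  fun _ _ h => Submodule.span_mono (Set.image_mono fun _ hl => le_trans hl h)

lemma exists_mem_wordsLe (x : Q) : ∃ n, x ∈ M.wordsLe n := by
  have htop : ⨆ n, M.wordsLe n = ⊤ := by
    refine eq_top_iff.2 (M.span_words ▸ Submodule.span_le.2 ?_)
    rintro _ ⟨l, rfl⟩
    exact Submodule.mem_iSup_of_mem l.length (M.ofWord_mem_wordsLe le_rfl)
  exact (Submodule.mem_iSup_of_directed _ M.wordsLe_mono.directed_le).1 (htop ▸ trivial)

lemma cons_mem_wordsLe {n : ℕ} (a : A) {u : Q} (hu : u ∈ M.wordsLe n) :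
    M.cons a u ∈ M.wordsLe (n + 1) := by
  have : M.wordsLe n ≤ (M.wordsLe (n + 1)).comap (M.cons a) := by
    refine Submodule.span_le.2 ?_
    rintro _ ⟨l, hl, rfl⟩
    exact M.ofWord_mem_wordsLe (l := a :: l) (Nat.succ_le_succ hl)
  exact this hu

def theta : (k × (A ⊗[k] Q)) ≃ₗ[k] Q :=
  LinearEquiv.ofBijective _ M.theta_bij

lemma theta_apply (c : k) (t : A ⊗[k] Q) :
    M.theta (c, t) = c • M.emp + TensorProduct.lift M.cons t := rfl

lemma theta_symm_emp : M.theta.symm M.emp = (1, 0) := by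
  rw [LinearEquiv.symm_apply_eq, theta_apply, one_smul, map_zero, add_zero]

lemma theta_symm_cons (a : A) (u : Q) : M.theta.symm (M.cons a u) = (0, a ⊗ₜ u) := by
  rw [LinearEquiv.symm_apply_eq, theta_apply, zero_smul, zero_add, TensorProduct.lift.tmul]

lemma counit_lift_cons (t : A ⊗[k] Q) : M.counit (TensorProduct.lift M.cons t) = 0 := by
  induction t using TensorProduct.induction_on with
  | zero => rw [map_zero, map_zero]
  | tmul a u => rw [TensorProduct.lift.tmul, M.counit_cons]
  | add s t hs ht => rw [map_add, map_add, hs, ht, add_zero]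

lemma ker_counit_eq_range :
    LinearMap.ker M.counit = LinearMap.range (TensorProduct.lift M.cons) := by
  refine le_antisymm (fun x hx => ?_) (LinearMap.range_le_ker_iff.2 ?_)
  · obtain ⟨⟨c, t⟩, rfl⟩ := M.theta.surjective x
    have hc : c = 0 := by
      simpa [theta_apply, M.counit_emp, M.counit_lift_cons] using hx
    exact ⟨t, by rw [theta_apply, hc, zero_smul, zero_add]⟩
  · exact LinearMap.ext M.counit_lift_cons

lemma ker_counit_induction {P : Q → Prop} (zero : P 0) (add : ∀ u v, P u → P v → P (u + v))
    (cons : ∀ a u, P (M.cons a u)) : ∀ u ∈ LinearMap.ker M.counit, P u := by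
  intro u hu
  rw [ker_counit_eq_range] at hu
  obtain ⟨t, rfl⟩ := hu
  induction t using TensorProduct.induction_on with
  | zero => rwa [map_zero]
  | tmul a v => exact cons a v
  | add s t hs ht => rw [map_add]; exact add _ _ hs ht

end QShModel

section PrecExtension

variable (M : QShModel k A Q) (precB : B →ₗ[k] B →ₗ[k] B) (φ : A →ₗ[k] B)

/-- `ε(u) • φ(a) + φ(a) ≺ F(u)` is `φ(a) ≺ (ε(u) 1 + F(u))` in the unitization of `B`,
with the convention `x ≺ 1 = x`. -/
structure IsPrecExtension (F : Q →ₗ[k] B) : Prop where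
  map_emp : F M.emp = 0
  map_cons : ∀ a u, F (M.cons a u) = M.counit u • φ a + precB (φ a) (F u)

def precStep (F : Q →ₗ[k] B) : Q →ₗ[k] B :=
  (0 : k →ₗ[k] B).coprod (TensorProduct.lift
    ((LinearMap.lsmul k B).flip.compl₁₂ φ M.counit + precB.compl₁₂ φ F)) ∘ₗ
      M.theta.symm.toLinearMap

variable {M precB φ}

lemma precStep_emp (F : Q →ₗ[k] B) : precStep M precB φ F M.emp = 0 := by
  simp [precStep, M.theta_symm_emp]

lemma precStep_cons (F : Q →ₗ[k] B) (a : A) (u : Q) :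
    precStep M precB φ F (M.cons a u) = M.counit u • φ a + precB (φ a) (F u) := by
  simp [precStep, M.theta_symm_cons]

lemma precStep_eqOn_wordsLe {F G : Q →ₗ[k] B} {n : ℕ} (h : Set.EqOn F G (M.wordsLe n)) :
    Set.EqOn (precStep M precB φ F) (precStep M precB φ G) (M.wordsLe (n + 1)) := by
  refine LinearMap.eqOn_span' ?_
  rintro _ ⟨_ | ⟨a, l⟩, hl, rfl⟩
  · rw [QShModel.ofWord_nil, precStep_emp, precStep_emp]
  · rw [QShModel.ofWord_cons, precStep_cons, precStep_cons,
      h (M.ofWord_mem_wordsLe (Nat.le_of_succ_le_succ hl))]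

variable (M precB φ)

lemma exists_isPrecExtension : ∃ F, IsPrecExtension M precB φ F := by
  let f : ℕ → Q →ₗ[k] B := fun n => (precStep M precB φ)^[n] 0
  have hf : ∀ n, Set.EqOn (f (n + 1)) (f n) (M.wordsLe n) := by
    intro n
    induction n with
    | zero =>
      refine LinearMap.eqOn_span' ?_
      rintro _ ⟨_ | ⟨a, l⟩, hl, rfl⟩
      · exact precStep_emp 0
      · simp at hl
    | succ n ih =>
      simp only [f, Function.iterate_succ_apply'] at ih ⊢
      exact precStep_eqOn_wordsLe ih
  obtain ⟨F, hF⟩ := LinearMap.exists_eqOn_of_monotone M.wordsLe_mono M.exists_mem_wordsLe hf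
  refine ⟨F, hF 0 (M.ofWord_mem_wordsLe (l := []) le_rfl), fun a u => ?_⟩
  obtain ⟨n, hu⟩ := M.exists_mem_wordsLe u
  rw [hF (n + 1) (M.cons_mem_wordsLe a hu), hF n hu]
  simp only [f, Function.iterate_succ_apply', precStep_cons]

variable {M precB φ}

lemma IsPrecExtension.eq {F G : Q →ₗ[k] B} (hF : IsPrecExtension M precB φ F)
    (hG : IsPrecExtension M precB φ G) : F = G := by
  refine M.linearMap_ext_ofWord fun l => ?_
  induction l with
  | nil => rw [QShModel.ofWord_nil, hF.map_emp, hG.map_emp]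
  | cons a l ih => rw [QShModel.ofWord_cons, hF.map_cons, hG.map_cons, ih]

lemma IsPrecExtension.map_cons_emp {F : Q →ₗ[k] B} (hF : IsPrecExtension M precB φ F) (a : A) :
    F (M.cons a M.emp) = φ a := by
  rw [hF.map_cons, M.counit_emp, one_smul, hF.map_emp, map_zero, add_zero]

lemma IsPrecExtension.map_ofWord_append_singleton {F : Q →ₗ[k] B}
    (hF : IsPrecExtension M precB φ F) (l : List A) (a : A) :
    F (M.ofWord (l ++ [a])) = l.foldr (fun x acc => precB (φ x) acc) (φ a) := by
  induction l with
  | nil => exact hF.map_cons_emp a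
  | cons x l ih =>
    have hε : M.counit (M.ofWord (l ++ [a])) = 0 := by
      cases l <;> exact M.counit_cons _ _
    rw [List.cons_append, QShModel.ofWord_cons, hF.map_cons, hε, zero_smul, zero_add, ih,
      List.foldr_cons]

end PrecExtension

section Morphism

variable {M : QShFullModel k A Q} {precB bulB : B →ₗ[k] B →ₗ[k] B} {φ : A →ₗ[k] B}
  {F : Q →ₗ[k] B}

lemma IsPrecExtension.map_mul (hB : IsQShAlgebra precB bulB)
    (hφ : ∀ a b, φ (a * b) = bulB (φ a) (φ b))
    (hF : IsPrecExtension M.toQShModel precB φ F) (u v : Q) :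
    F (M.mul u v) = M.counit u • F v + M.counit v • F u + qshStar precB bulB (F u) (F v) := by
  let L := (LinearMap.lsmul k B).compl₁₂ M.counit F
  suffices M.mul.compr₂ F = L + L.flip + (qshStar precB bulB).compl₁₂ F F from
    LinearMap.congr_fun₂ this u v
  refine M.linearMap_ext₂_ofWord fun l l' => ?_
  simp only [LinearMap.compr₂_apply, LinearMap.add_apply, LinearMap.flip_apply,
    LinearMap.compl₁₂_apply, LinearMap.lsmul_apply, L]
  induction l generalizing l' with
  | nil => simp [QShModel.ofWord_nil, M.mul_emp_left, M.counit_emp, hF.map_emp]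
  | cons a t ih =>
    induction l' with
    | nil => simp [QShModel.ofWord_nil, M.mul_emp_right, M.counit_emp, hF.map_emp]
    | cons b t' ih' =>
      have ih₁ := ih (b :: t')
      have ih₂ := ih t'
      simp only [QShModel.ofWord_cons] at ih₁ ih' ⊢
      rw [M.mul_cons, map_add, map_add, hF.map_cons, hF.map_cons, hF.map_cons, ih₁, ih', ih₂,
        M.counit_mul, M.counit_mul, M.counit_mul, M.counit_cons, M.counit_cons, hφ]
      simp only [mul_zero, zero_mul, zero_smul, add_zero, zero_add]
      exact (hB.qshStar_smul_add_prec _ _ _ _ _ _ _ _ (hF.map_cons a _) (hF.map_cons b _)).symm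

lemma IsPrecExtension.map_prec (hB : IsQShAlgebra precB bulB)
    (hφ : ∀ a b, φ (a * b) = bulB (φ a) (φ b))
    (hF : IsPrecExtension M.toQShModel precB φ F) :
    ∀ u ∈ LinearMap.ker M.counit, ∀ v ∈ LinearMap.ker M.counit,
      F (M.prec u v) = precB (F u) (F v) := by
  intro u hu v hv
  refine M.ker_counit_induction (P := fun u => F (M.prec u v) = precB (F u) (F v))
    (by simp) (fun u u' hu hu' => ?_) (fun a t => ?_) u hu
  · simp only [map_add, LinearMap.add_apply, hu, hu']
  · rw [M.prec_cons, hF.map_cons, hF.map_mul hB hφ, M.counit_mul, LinearMap.mem_ker.1 hv,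
      hF.map_cons, hB.prec_smul_add_prec]
    simp only [mul_zero, zero_smul, add_zero, zero_add]

lemma IsPrecExtension.map_bul (hB : IsQShAlgebra precB bulB)
    (hφ : ∀ a b, φ (a * b) = bulB (φ a) (φ b))
    (hF : IsPrecExtension M.toQShModel precB φ F) :
    ∀ u ∈ LinearMap.ker M.counit, ∀ v ∈ LinearMap.ker M.counit,
      F (M.bul u v) = bulB (F u) (F v) := by
  refine M.ker_counit_induction (by simp) (fun u u' hu hu' v hv => ?_) (fun a t v hv => ?_)
  · simp only [map_add, LinearMap.add_apply, hu v hv, hu' v hv]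
  refine M.ker_counit_induction
    (P := fun v => F (M.bul (M.cons a t) v) = bulB (F (M.cons a t)) (F v))
    (by simp) (fun v v' hv hv' => ?_) (fun b w => ?_) v hv
  · simp only [map_add, hv, hv']
  · rw [M.bul_cons, hF.map_cons, hF.map_mul hB hφ, M.counit_mul, hF.map_cons, hF.map_cons, hφ,
      hB.bul_smul_add_prec]

/-- `u - ε(u) 1` lies in `QSh⁺(A)`, and `a(u - ε(u) 1) = a ≺ (u - ε(u) 1)`. -/
lemma isPrecExtension_of_map_prec (h0 : F M.emp = 0) (h1 : ∀ a, F (M.cons a M.emp) = φ a)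
    (hprec : ∀ u ∈ LinearMap.ker M.counit, ∀ v ∈ LinearMap.ker M.counit,
      F (M.prec u v) = precB (F u) (F v)) :
    IsPrecExtension M.toQShModel precB φ F := by
  refine ⟨h0, fun a u => ?_⟩
  set u' := u - M.counit u • M.emp
  have hu' : u' ∈ LinearMap.ker M.counit := by simp [u', M.counit_emp]
  have hcons :
      F (M.cons a u) = F (M.prec (M.cons a M.emp) u') + M.counit u • F (M.cons a M.emp) := by
    rw [M.prec_cons, M.mul_emp_left]
    simp [u']
  rw [hcons, hprec _ (M.counit_cons a M.emp) _ hu', h1, add_comm]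
  simp [u', h0]

end Morphism

end QShPaper

open QShPaper in
theorem stmt8_quasi_shuffle_PBW_general
    (k : Type*) [Field k]
    (A : Type*) [NonUnitalCommRing A] [Module k A] [SMulCommClass k A A] [IsScalarTower k A A]
    (Q : Type*) [AddCommGroup Q] [Module k Q]
    (M : QShFullModel k A Q)
    -- `(B, ≺, •)` is a quasi-shuffle algebra
    (B : Type*) [AddCommGroup B] [Module k B]
    (precB bulB : B →ₗ[k] B →ₗ[k] B)
    (hcomm : ∀ x y : B, bulB x y = bulB y x)
    (hQS1 : ∀ x y z : B,
      precB (precB x y) z = precB x (precB y z + precB z y + bulB y z))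
    (hQS2 : ∀ x y z : B, precB (bulB x y) z = bulB x (precB y z)) :
    ∀ φ : A →ₗ[k] B, (∀ a b : A, φ (a * b) = bulB (φ a) (φ b)) →
      -- unique extension to a quasi-shuffle morphism on `QSh⁺(A)`
      (∃! F : Q →ₗ[k] B,
        F M.emp = 0 ∧
        (∀ a : A, F (M.cons a M.emp) = φ a) ∧
        (∀ u ∈ LinearMap.ker M.counit, ∀ v ∈ LinearMap.ker M.counit,
          F (M.prec u v) = precB (F u) (F v)) ∧
        (∀ u ∈ LinearMap.ker M.counit, ∀ v ∈ LinearMap.ker M.counit,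
          F (M.bul u v) = bulB (F u) (F v))) ∧
      -- the extension is given on words by iterated `≺`
      (∀ F : Q →ₗ[k] B,
        F M.emp = 0 →
        (∀ a : A, F (M.cons a M.emp) = φ a) →
        (∀ u ∈ LinearMap.ker M.counit, ∀ v ∈ LinearMap.ker M.counit,
          F (M.prec u v) = precB (F u) (F v)) →
        (∀ u ∈ LinearMap.ker M.counit, ∀ v ∈ LinearMap.ker M.counit,
          F (M.bul u v) = bulB (F u) (F v)) →
        ∀ (l : List A) (a : A),
          F (M.ofWord (l ++ [a])) =
            l.foldr (fun x acc => precB (φ x) acc) (φ a)) ∧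
      -- conversely, restriction to `A` of a quasi-shuffle morphism is an algebra morphism
      (∀ F : Q →ₗ[k] B,
        F M.emp = 0 →
        (∀ u ∈ LinearMap.ker M.counit, ∀ v ∈ LinearMap.ker M.counit,
          F (M.bul u v) = bulB (F u) (F v)) →
        ∀ a b : A, F (M.cons (a * b) M.emp) =
          bulB (F (M.cons a M.emp)) (F (M.cons b M.emp))) := by
  intro φ hφ
  have hB : IsQShAlgebra precB bulB := ⟨hcomm, hQS1, hQS2⟩
  have hker : ∀ a : A, M.cons a M.emp ∈ LinearMap.ker M.counit := fun a => M.counit_cons a M.emp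
  obtain ⟨F, hF⟩ := exists_isPrecExtension M.toQShModel precB φ
  refine ⟨⟨F, ⟨hF.map_emp, hF.map_cons_emp, hF.map_prec hB hφ, hF.map_bul hB hφ⟩, ?_⟩,
    ?_, ?_⟩
  · rintro G ⟨h0, h1, hprec, -⟩
    exact (isPrecExtension_of_map_prec h0 h1 hprec).eq hF
  · intro G h0 h1 hprec _
    exact (isPrecExtension_of_map_prec h0 h1 hprec).map_ofWord_append_singleton
  · intro G _ hbul a b
    rw [← hbul _ (hker a) _ (hker b), M.bul_cons, M.mul_emp_left]

open QShPaper in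
/-- **quasi-shuffle PBW theorem.** For a nonunital commutative algebra `A`
and a quasi-shuffle algebra `(B, ≺, •)`, every algebra morphism `φ : (A,·) → (B,•)`
extends uniquely to a morphism of quasi-shuffle algebras `QSh⁺(A) → B`, which sends the
word `a_1…a_n` to `φ(a_1) ≺ (φ(a_2) ≺ (… ≺ φ(a_n)))`; moreover every quasi-shuffle
morphism `QSh⁺(A) → B` restricts to an algebra morphism on `A`. In categorical terms,
Hoffman's functor `A ↦ QSh⁺(A)` is left adjoint to the forgetful functor from
quasi-shuffle algebras to nonunital commutative algebras. -/
theorem stmt8_quasi_shuffle_PBW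
    (k : Type*) [Field k] [CharZero k]
    (A : Type*) [NonUnitalCommRing A] [Module k A] [SMulCommClass k A A] [IsScalarTower k A A]
    (Q : Type*) [AddCommGroup Q] [Module k Q]
    (M : QShFullModel k A Q)
    -- `(B, ≺, •)` is a quasi-shuffle algebra
    (B : Type*) [AddCommGroup B] [Module k B]
    (precB bulB : B →ₗ[k] B →ₗ[k] B)
    (hcomm : ∀ x y : B, bulB x y = bulB y x)
    (hassoc : ∀ x y z : B, bulB (bulB x y) z = bulB x (bulB y z))
    (hQS1 : ∀ x y z : B,
      precB (precB x y) z = precB x (precB y z + precB z y + bulB y z))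
    (hQS2 : ∀ x y z : B, precB (bulB x y) z = bulB x (precB y z)) :
    ∀ φ : A →ₗ[k] B, (∀ a b : A, φ (a * b) = bulB (φ a) (φ b)) →
      -- unique extension to a quasi-shuffle morphism on `QSh⁺(A)`
      (∃! F : Q →ₗ[k] B,
        F M.emp = 0 ∧
        (∀ a : A, F (M.cons a M.emp) = φ a) ∧
        (∀ u ∈ LinearMap.ker M.counit, ∀ v ∈ LinearMap.ker M.counit,
          F (M.prec u v) = precB (F u) (F v)) ∧
        (∀ u ∈ LinearMap.ker M.counit, ∀ v ∈ LinearMap.ker M.counit,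
          F (M.bul u v) = bulB (F u) (F v))) ∧
      -- the extension is given on words by iterated `≺`
      (∀ F : Q →ₗ[k] B,
        F M.emp = 0 →
        (∀ a : A, F (M.cons a M.emp) = φ a) →
        (∀ u ∈ LinearMap.ker M.counit, ∀ v ∈ LinearMap.ker M.counit,
          F (M.prec u v) = precB (F u) (F v)) →
        (∀ u ∈ LinearMap.ker M.counit, ∀ v ∈ LinearMap.ker M.counit,
          F (M.bul u v) = bulB (F u) (F v)) →
        ∀ (l : List A) (a : A),
          F (M.ofWord (l ++ [a])) =
            l.foldr (fun x acc => precB (φ x) acc) (φ a)) ∧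
      -- conversely, restriction to `A` of a quasi-shuffle morphism is an algebra morphism
      (∀ F : Q →ₗ[k] B,
        F M.emp = 0 →
        (∀ u ∈ LinearMap.ker M.counit, ∀ v ∈ LinearMap.ker M.counit,
          F (M.bul u v) = bulB (F u) (F v)) →
        ∀ a b : A, F (M.cons (a * b) M.emp) =
          bulB (F (M.cons a M.emp)) (F (M.cons b M.emp))) :=
  stmt8_quasi_shuffle_PBW_general k A Q M B precB bulB hcomm hQS1 hQS2
end
end
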